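/- Let α ∈ [0,1] with α ≠ 1/2, and define d̃_α on P × P by d̃_α(p,p') := min(s,s')^{1−2α}|θ−θ'|² + min(s,s')^{2α−1}‖x−x'‖² + |⟨x−x', e_θ⟩|, where e_θ = (cos θ, −sin θ). Then d̃_α does not satisfy any pseudo-triangle inequality: for every constant C ≥ 1 there exist p, p', p'' ∈ P with d̃_α(p,p') > C·(d̃_α(p,p'') + d̃_α(p'',p')). (Explicitly: if α < 1/2, take s = s' > C^{1/(1−2α)}, s'' = 1, θ = 0, θ' = θ'' ≠ 0, x = x' = x'' = 0; if α > 1/2, take s = s' > C^{1/(2α−1)}, s'' = 1, θ = θ' = θ'' = 0, x = 0, x' = x'' = (0,y) with y ≠ 0.) -/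
import Mathlib


/-- A point of the parameter space `P = ℝ₊ × S¹ × ℝ²` is encoded as
`(s, θ, x₁, x₂) : ℝ × ℝ × ℝ × ℝ` with `s > 0`.  The function
`d̃_α(p,p') = min(s,s')^{1−2α}|θ−θ'|² + min(s,s')^{2α−1}‖x−x'‖² + |⟨x−x', e_θ⟩|`,
where `e_θ = (cos θ, −sin θ)`. -/
noncomputable def dTilde (α : ℝ) (p q : ℝ × ℝ × ℝ × ℝ) : ℝ :=
  min p.1 q.1 ^ (1 - 2 * α) * (p.2.1 - q.2.1) ^ 2 +
    min p.1 q.1 ^ (2 * α - 1) * ((p.2.2.1 - q.2.2.1) ^ 2 + (p.2.2.2 - q.2.2.2) ^ 2) +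
    |(p.2.2.1 - q.2.2.1) * Real.cos p.2.1 - (p.2.2.2 - q.2.2.2) * Real.sin p.2.1|

/-- For `α ∈ [0,1]` with `α ≠ 1/2`, the function `d̃_α` satisfies no pseudo-triangle
inequality: for every `C ≥ 1` there are points `p, p', p''` of `P` with
`d̃_α(p,p') > C (d̃_α(p,p'') + d̃_α(p'',p'))`. -/
theorem stmt_11 (α : ℝ) (hα : α ∈ Set.Icc (0 : ℝ) 1) (hα2 : α ≠ 1 / 2) :
    ∀ C : ℝ, 1 ≤ C → ∃ p p' p'' : ℝ × ℝ × ℝ × ℝ,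
      0 < p.1 ∧ 0 < p'.1 ∧ 0 < p''.1 ∧
      dTilde α p p' > C * (dTilde α p p'' + dTilde α p'' p') := by
  intro C hC
  have h2C : (1 : ℝ) < 2 * C := by linarith
  have h2C0 : (0 : ℝ) < 2 * C := by linarith
  rcases lt_or_gt_of_ne hα2 with hlt | hgt
  · -- α < 1/2, β = 1 - 2α > 0
    set β : ℝ := 1 - 2 * α with hβdef
    have hβ : 0 < β := by simp [hβdef]; linarith
    set S : ℝ := (2 * C) ^ (1 / β) with hSdef
    have hS1 : 1 < S := Real.one_lt_rpow_iff_of_pos h2C0 |>.2 (Or.inl ⟨h2C, by positivity⟩)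
    have hS0 : 0 < S := by linarith
    have hSβ : S ^ β = 2 * C := by
      rw [hSdef, ← Real.rpow_mul h2C0.le, one_div, inv_mul_cancel₀ hβ.ne', Real.rpow_one]
    refine ⟨(S, 0, 0, 0), (S, 1, 0, 0), (1, 1, 0, 0), hS0, hS0, one_pos, ?_⟩
    have hmin : min S 1 = 1 := min_eq_right hS1.le
    have hmin' : min (1:ℝ) S = 1 := min_eq_left hS1.le
    simp only [dTilde, min_self, hmin, hmin', Real.one_rpow]
    norm_num
    calc C < 2 * C := by linarith
      _ = S ^ β := hSβ.symm
      _ = S ^ (1 - 2 * α) := by rw [hβdef]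
  · -- α > 1/2, β = 2α - 1 > 0
    set β : ℝ := 2 * α - 1 with hβdef
    have hβ : 0 < β := by simp [hβdef]; linarith
    set S : ℝ := (2 * C) ^ (1 / β) with hSdef
    have hS1 : 1 < S := Real.one_lt_rpow_iff_of_pos h2C0 |>.2 (Or.inl ⟨h2C, by positivity⟩)
    have hS0 : 0 < S := by linarith
    have hSβ : S ^ β = 2 * C := by
      rw [hSdef, ← Real.rpow_mul h2C0.le, one_div, inv_mul_cancel₀ hβ.ne', Real.rpow_one]
    refine ⟨(S, 0, 0, 0), (S, 0, 0, 1), (1, 0, 0, 1), hS0, hS0, one_pos, ?_⟩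
    have hmin : min S 1 = 1 := min_eq_right hS1.le
    have hmin' : min (1:ℝ) S = 1 := min_eq_left hS1.le
    simp only [dTilde, min_self, hmin, hmin', Real.one_rpow, Real.sin_zero, Real.cos_zero]
    norm_num
    calc C < 2 * C := by linarith
      _ = S ^ β := hSβ.symm
      _ = S ^ (2 * α - 1) := by rw [hβdef]
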